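/- Let α ∈ (1-√2, 1), γ = √2-1, v_α = (γ+α)/√2, and g_α(u) = (1-u) + (α-u)²/(1-u). Then for all a < b, lim_{t→∞} e^{2γ(1-α)t} ∫_a^b e^{-t g_α(v_α + r/√t)} dr = ∫_a^b e^{-(2√2/(1-α)) r²} dr. -/

import Mathlib

/-!
The Taylor expansion of `g_α` at `v_α` is exact up to a rational remainder: with
`w = 1 - v_α = (1 - α)/√2` one has `g_α(v_α + h) = 2γ(1 - α) + 2h²/(w - h)`.
Hence the rescaled integrand is exactly `exp (-(2r² / (w - r/√t)))`, which is bounded by `1`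
on `[a, b]` as soon as `w√t` exceeds the interval, and converges pointwise to `exp (-(2r²/w))`;
dominated convergence concludes.
-/

open Real Filter MeasureTheory Topology Set

theorem tendsto_intervalIntegral_exp_neg_div_sub {ι : Type*} {l : Filter ι}
    [l.IsCountablyGenerated] {ε : ι → ℝ} (hε : Tendsto ε l (𝓝 0)) {f : ℝ → ℝ}
    (hf : Measurable f) (hf0 : ∀ r, 0 ≤ f r) {w : ℝ} (hw : 0 < w) (a b : ℝ) :
    Tendsto (fun i => ∫ r in a..b, exp (-(f r / (w - r * ε i)))) l
      (𝓝 (∫ r in a..b, exp (-(f r / w)))) := by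
  obtain ⟨M, hM⟩ := (isCompact_uIcc (a := a) (b := b)).isBounded.exists_norm_le
  have hsmall : ∀ᶠ i in l, M * |ε i| < w := by
    have : Tendsto (fun i => M * |ε i|) l (𝓝 0) := by simpa using hε.abs.const_mul M
    exact this.eventually_lt_const hw
  refine intervalIntegral.tendsto_integral_filter_of_dominated_convergence (fun _ => 1)
    (.of_forall fun i =>
      (measurable_exp.comp (hf.div (by fun_prop)).neg).aestronglyMeasurable)
    ?_ intervalIntegrable_const ?_
  · filter_upwards [hsmall] with i hi
    refine .of_forall fun r hr => ?_
    have hrM : |r| ≤ M := hM r (uIoc_subset_uIcc hr)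
    have hden : r * ε i ≤ w := calc
      r * ε i ≤ |r| * |ε i| := abs_mul r (ε i) ▸ le_abs_self _
      _ ≤ M * |ε i| := by gcongr
      _ ≤ w := hi.le
    rw [norm_of_nonneg (exp_pos _).le, exp_le_one_iff, neg_nonpos]
    exact div_nonneg (hf0 r) (sub_nonneg.mpr hden)
  · refine .of_forall fun r _ => ?_
    have hden : Tendsto (fun i => w - r * ε i) l (𝓝 w) := by
      simpa using tendsto_const_nhds.sub (hε.const_mul r)
    exact (continuous_exp.tendsto _).comp ((tendsto_const_nhds.div hden hw.ne').neg)

theorem one_sub_add_sq_div_one_sub_eq {α x : ℝ} (hx : x ≠ 1) :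
    (1 - x) + (α - x) ^ 2 / (1 - x)
      = 2 * (√2 - 1) * (1 - α) + 2 * (x - (√2 - 1 + α) / √2) ^ 2 / (1 - x) := by
  have hx' : 1 - x ≠ 0 := sub_ne_zero.mpr hx.symm
  have s2 : √2 ^ 2 = 2 := sq_sqrt zero_le_two
  field_simp
  linear_combination ((1 - α) ^ 2 - 2 * (1 - x) * (1 - α) * √2) * s2

theorem laplace_method_limit_general (α γ v : ℝ) (h2 : α < 1)
    (hγ : γ = Real.sqrt 2 - 1) (hv : v = (γ + α) / Real.sqrt 2)
    (g : ℝ → ℝ) (hg : ∀ u : ℝ, g u = (1 - u) + (α - u) ^ 2 / (1 - u))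
    (a b : ℝ) :
    Filter.Tendsto
      (fun t : ℝ => Real.exp (2 * γ * (1 - α) * t) *
        ∫ r in a..b, Real.exp (-t * g (v + r / Real.sqrt t)))
      Filter.atTop
      (nhds (∫ r in a..b, Real.exp (-(2 * Real.sqrt 2 / (1 - α)) * r ^ 2))) := by
  subst hγ hv
  have hv_eq : (√2 - 1 + α) / √2 = 1 - (1 - α) / √2 := by
    field_simp
    ring
  rw [hv_eq]
  have hw : 0 < (1 - α) / √2 := div_pos (by linarith) (by positivity)
  have hlim : (fun r : ℝ => exp (-(2 * √2 / (1 - α)) * r ^ 2))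
      = fun r => exp (-(2 * r ^ 2 / ((1 - α) / √2))) := by
    ext r
    congr 1
    field_simp
  rw [hlim]
  refine (tendsto_intervalIntegral_exp_neg_div_sub
    (tendsto_inv_atTop_zero.comp tendsto_sqrt_atTop) (by fun_prop) (fun r => by positivity)
    hw a b).congr' ?_
  filter_upwards [eventually_gt_atTop 0] with t ht
  rw [← intervalIntegral.integral_const_mul]
  refine intervalIntegral.integral_congr_ae ?_
  -- At `r = w√t` the junk value `x / 0 = 0` breaks the identity for `g`; one point is null.
  filter_upwards [volume.ae_ne ((1 - α) / √2 * √t)] with r hr _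
  have hx : 1 - (1 - α) / √2 + r / √t ≠ 1 := fun h =>
    hr ((div_eq_iff (sqrt_pos.mpr ht).ne').mp (by linarith))
  have hsq : (r / √t) ^ 2 = r ^ 2 / t := by rw [div_pow, sq_sqrt ht.le]
  rw [← exp_add, hg, one_sub_add_sq_div_one_sub_eq hx, hv_eq]
  simp only [Function.comp_apply, add_sub_cancel_left, hsq]
  congr 1
  field_simp
  ring

/-- Laplace method limit: for `α ∈ (1-√2, 1)`, `γ = √2-1`, `v_α = (γ+α)/√2` and
`g_α(u) = (1-u)+(α-u)²/(1-u)`, for all `a < b`,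
`e^{2γ(1-α)t} ∫_a^b e^{-t g_α(v_α + r/√t)} dr → ∫_a^b e^{-(2√2/(1-α)) r²} dr`. -/
theorem laplace_method_limit (α γ v : ℝ) (h1 : 1 - Real.sqrt 2 < α) (h2 : α < 1)
    (hγ : γ = Real.sqrt 2 - 1) (hv : v = (γ + α) / Real.sqrt 2)
    (g : ℝ → ℝ) (hg : ∀ u : ℝ, g u = (1 - u) + (α - u) ^ 2 / (1 - u))
    (a b : ℝ) (hab : a < b) :
    Filter.Tendsto
      (fun t : ℝ => Real.exp (2 * γ * (1 - α) * t) *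
        ∫ r in a..b, Real.exp (-t * g (v + r / Real.sqrt t)))
      Filter.atTop
      (nhds (∫ r in a..b, Real.exp (-(2 * Real.sqrt 2 / (1 - α)) * r ^ 2))) :=
  laplace_method_limit_general α γ v h2 hγ hv g hg a b
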